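/- arXiv:2601.02230 — 2 statements merged into one kernel-verified Lean document; each statement's English description precedes it below -/
import Mathlib

section
/- Let G be the group given by the presentation with ten generators x1, x2, x3, x4, x5, y1, y2, y3, y4, y5 and the thirteen relators: (1) y1⁻¹·x1⁻¹·y5·x1, (2) x1⁻¹·y5⁻¹·x5·y5, (3) x2⁻¹·x5⁻¹·x1·x5, (4) y5⁻¹·y1⁻¹·y4·y1, (5) y2⁻¹·x1⁻¹·y1·x2, (6) x3⁻¹·y2⁻¹·x2·y2, (7) x5⁻¹·x3⁻¹·x4·x3, (8) y3⁻¹·y4⁻¹·y2·y4, (9) y4⁻¹·x4⁻¹·y4·x3, (10) x3⁻¹·y4⁻¹·x3·y3, (11) y5·x5·y2·x3⁻¹·x3⁻¹·y4⁻¹·x3, (12) x1·x2·y4·y3⁻¹·y3⁻¹·x3⁻¹·y1, (13) x1·x5⁻¹. Then G is the trivial group, i.e., every element of this presented group equals the identity. -/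
/-- The generators of the free group on ten letters: indices `0,…,4` correspond to
`x1,…,x5` and indices `5,…,9` correspond to `y1,…,y5`. -/
def X (i : Fin 10) : FreeGroup (Fin 10) := FreeGroup.of i

/-- The thirteen relators of the Wirtinger-type presentation of the fundamental group of
the cobordism `W_{1,1}`. -/
def corkRels : Set (FreeGroup (Fin 10)) :=
  { (X 5)⁻¹ * (X 0)⁻¹ * X 9 * X 0,                          -- (1)  y1⁻¹ x1⁻¹ y5 x1
    (X 0)⁻¹ * (X 9)⁻¹ * X 4 * X 9,                          -- (2)  x1⁻¹ y5⁻¹ x5 y5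
    (X 1)⁻¹ * (X 4)⁻¹ * X 0 * X 4,                          -- (3)  x2⁻¹ x5⁻¹ x1 x5
    (X 9)⁻¹ * (X 5)⁻¹ * X 8 * X 5,                          -- (4)  y5⁻¹ y1⁻¹ y4 y1
    (X 6)⁻¹ * (X 0)⁻¹ * X 5 * X 1,                          -- (5)  y2⁻¹ x1⁻¹ y1 x2
    (X 2)⁻¹ * (X 6)⁻¹ * X 1 * X 6,                          -- (6)  x3⁻¹ y2⁻¹ x2 y2
    (X 4)⁻¹ * (X 2)⁻¹ * X 3 * X 2,                          -- (7)  x5⁻¹ x3⁻¹ x4 x3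
    (X 7)⁻¹ * (X 8)⁻¹ * X 6 * X 8,                          -- (8)  y3⁻¹ y4⁻¹ y2 y4
    (X 8)⁻¹ * (X 3)⁻¹ * X 8 * X 2,                          -- (9)  y4⁻¹ x4⁻¹ y4 x3
    (X 2)⁻¹ * (X 8)⁻¹ * X 2 * X 7,                          -- (10) x3⁻¹ y4⁻¹ x3 y3
    X 9 * X 4 * X 6 * (X 2)⁻¹ * (X 2)⁻¹ * (X 8)⁻¹ * X 2,    -- (11) y5 x5 y2 x3⁻¹ x3⁻¹ y4⁻¹ x3
    X 0 * X 1 * X 8 * (X 7)⁻¹ * (X 7)⁻¹ * (X 2)⁻¹ * X 5,    -- (12) x1 x2 y4 y3⁻¹ y3⁻¹ x3⁻¹ y1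
    X 0 * (X 4)⁻¹ }                                          -- (13) x1 x5⁻¹

section aux

/-- images of the generators in the presented group -/
abbrev A (i : Fin 10) : PresentedGroup corkRels := PresentedGroup.of i

lemma relA : ∀ r ∈ corkRels, PresentedGroup.mk corkRels r = 1 := fun r hr =>
  (QuotientGroup.eq_one_iff r).mpr (Subgroup.subset_normalClosure hr)

lemma mkXA (i : Fin 10) : PresentedGroup.mk corkRels (X i) = A i := rfl

set_option maxHeartbeats 1000000 in
lemma ofA_eq_one : ∀ i : Fin 10, A i = 1 := by
  have r1 : (A 5)⁻¹ * (A 0)⁻¹ * A 9 * A 0 = 1 := by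
    have h := relA ((X 5)⁻¹ * (X 0)⁻¹ * X 9 * X 0) (Set.mem_insert _ _)
    simpa only [map_mul, map_inv, mkXA] using h
  have r2 : (A 0)⁻¹ * (A 9)⁻¹ * A 4 * A 9 = 1 := by
    have h := relA ((X 0)⁻¹ * (X 9)⁻¹ * X 4 * X 9) (Set.mem_insert_of_mem _ (Set.mem_insert _ _))
    simpa only [map_mul, map_inv, mkXA] using h
  have r3 : (A 1)⁻¹ * (A 4)⁻¹ * A 0 * A 4 = 1 := by
    have h := relA ((X 1)⁻¹ * (X 4)⁻¹ * X 0 * X 4) (Set.mem_insert_of_mem _ (Set.mem_insert_of_mem _ (Set.mem_insert _ _)))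
    simpa only [map_mul, map_inv, mkXA] using h
  have r4 : (A 9)⁻¹ * (A 5)⁻¹ * A 8 * A 5 = 1 := by
    have h := relA ((X 9)⁻¹ * (X 5)⁻¹ * X 8 * X 5) (Set.mem_insert_of_mem _ (Set.mem_insert_of_mem _ (Set.mem_insert_of_mem _ (Set.mem_insert _ _))))
    simpa only [map_mul, map_inv, mkXA] using h
  have r5 : (A 6)⁻¹ * (A 0)⁻¹ * A 5 * A 1 = 1 := by
    have h := relA ((X 6)⁻¹ * (X 0)⁻¹ * X 5 * X 1) (Set.mem_insert_of_mem _ (Set.mem_insert_of_mem _ (Set.mem_insert_of_mem _ (Set.mem_insert_of_mem _ (Set.mem_insert _ _)))))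
    simpa only [map_mul, map_inv, mkXA] using h
  have r6 : (A 2)⁻¹ * (A 6)⁻¹ * A 1 * A 6 = 1 := by
    have h := relA ((X 2)⁻¹ * (X 6)⁻¹ * X 1 * X 6) (Set.mem_insert_of_mem _ (Set.mem_insert_of_mem _ (Set.mem_insert_of_mem _ (Set.mem_insert_of_mem _ (Set.mem_insert_of_mem _ (Set.mem_insert _ _))))))
    simpa only [map_mul, map_inv, mkXA] using h
  have r7 : (A 4)⁻¹ * (A 2)⁻¹ * A 3 * A 2 = 1 := by
    have h := relA ((X 4)⁻¹ * (X 2)⁻¹ * X 3 * X 2) (Set.mem_insert_of_mem _ (Set.mem_insert_of_mem _ (Set.mem_insert_of_mem _ (Set.mem_insert_of_mem _ (Set.mem_insert_of_mem _ (Set.mem_insert_of_mem _ (Set.mem_insert _ _)))))))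
    simpa only [map_mul, map_inv, mkXA] using h
  have r8 : (A 7)⁻¹ * (A 8)⁻¹ * A 6 * A 8 = 1 := by
    have h := relA ((X 7)⁻¹ * (X 8)⁻¹ * X 6 * X 8) (Set.mem_insert_of_mem _ (Set.mem_insert_of_mem _ (Set.mem_insert_of_mem _ (Set.mem_insert_of_mem _ (Set.mem_insert_of_mem _ (Set.mem_insert_of_mem _ (Set.mem_insert_of_mem _ (Set.mem_insert _ _))))))))
    simpa only [map_mul, map_inv, mkXA] using h
  have r9 : (A 8)⁻¹ * (A 3)⁻¹ * A 8 * A 2 = 1 := by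
    have h := relA ((X 8)⁻¹ * (X 3)⁻¹ * X 8 * X 2) (Set.mem_insert_of_mem _ (Set.mem_insert_of_mem _ (Set.mem_insert_of_mem _ (Set.mem_insert_of_mem _ (Set.mem_insert_of_mem _ (Set.mem_insert_of_mem _ (Set.mem_insert_of_mem _ (Set.mem_insert_of_mem _ (Set.mem_insert _ _)))))))))
    simpa only [map_mul, map_inv, mkXA] using h
  have r10 : (A 2)⁻¹ * (A 8)⁻¹ * A 2 * A 7 = 1 := by
    have h := relA ((X 2)⁻¹ * (X 8)⁻¹ * X 2 * X 7) (Set.mem_insert_of_mem _ (Set.mem_insert_of_mem _ (Set.mem_insert_of_mem _ (Set.mem_insert_of_mem _ (Set.mem_insert_of_mem _ (Set.mem_insert_of_mem _ (Set.mem_insert_of_mem _ (Set.mem_insert_of_mem _ (Set.mem_insert_of_mem _ (Set.mem_insert _ _))))))))))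
    simpa only [map_mul, map_inv, mkXA] using h
  have r11 : A 9 * A 4 * A 6 * (A 2)⁻¹ * (A 2)⁻¹ * (A 8)⁻¹ * A 2 = 1 := by
    have h := relA (X 9 * X 4 * X 6 * (X 2)⁻¹ * (X 2)⁻¹ * (X 8)⁻¹ * X 2) (Set.mem_insert_of_mem _ (Set.mem_insert_of_mem _ (Set.mem_insert_of_mem _ (Set.mem_insert_of_mem _ (Set.mem_insert_of_mem _ (Set.mem_insert_of_mem _ (Set.mem_insert_of_mem _ (Set.mem_insert_of_mem _ (Set.mem_insert_of_mem _ (Set.mem_insert_of_mem _ (Set.mem_insert _ _)))))))))))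
    simpa only [map_mul, map_inv, mkXA] using h
  have r12 : A 0 * A 1 * A 8 * (A 7)⁻¹ * (A 7)⁻¹ * (A 2)⁻¹ * A 5 = 1 := by
    have h := relA (X 0 * X 1 * X 8 * (X 7)⁻¹ * (X 7)⁻¹ * (X 2)⁻¹ * X 5) (Set.mem_insert_of_mem _ (Set.mem_insert_of_mem _ (Set.mem_insert_of_mem _ (Set.mem_insert_of_mem _ (Set.mem_insert_of_mem _ (Set.mem_insert_of_mem _ (Set.mem_insert_of_mem _ (Set.mem_insert_of_mem _ (Set.mem_insert_of_mem _ (Set.mem_insert_of_mem _ (Set.mem_insert_of_mem _ (Set.mem_insert _ _))))))))))))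
    simpa only [map_mul, map_inv, mkXA] using h
  have r13 : A 0 * (A 4)⁻¹ = 1 := by
    have h := relA (X 0 * (X 4)⁻¹) (Set.mem_insert_of_mem _ (Set.mem_insert_of_mem _ (Set.mem_insert_of_mem _ (Set.mem_insert_of_mem _ (Set.mem_insert_of_mem _ (Set.mem_insert_of_mem _ (Set.mem_insert_of_mem _ (Set.mem_insert_of_mem _ (Set.mem_insert_of_mem _ (Set.mem_insert_of_mem _ (Set.mem_insert_of_mem _ (Set.mem_insert_of_mem _ (Set.mem_singleton _)))))))))))))
    simpa only [map_mul, map_inv, mkXA] using h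
  -- x5 = x1
  have e4 : A 4 = A 0 := by
    rw [mul_inv_eq_one] at r13; exact r13.symm
  rw [e4] at r2 r3 r7 r11
  -- x1 and y5 commute
  have comm : A 0 * A 9 = A 9 * A 0 := by
    have h : A 0 * A 9 = A 9 * A 0 * ((A 0)⁻¹ * (A 9)⁻¹ * A 0 * A 9) := by group
    rw [r2, mul_one] at h
    exact h
  have cm : Commute (A 0) (A 9) := comm
  have c2' : (A 9)⁻¹ * A 0 = A 0 * (A 9)⁻¹ := cm.inv_right.eq.symm
  have c4' : (A 0)⁻¹ * (A 9)⁻¹ = (A 9)⁻¹ * (A 0)⁻¹ := cm.inv_left.inv_right.eq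
  -- y1 = y5
  have h5 : (A 0)⁻¹ * (A 9 * A 0) = A 5 * ((A 5)⁻¹ * (A 0)⁻¹ * A 9 * A 0) := by group
  rw [r1, mul_one] at h5
  have e5 : A 5 = A 9 := by rw [← h5, ← comm]; group
  -- x2 = x1
  have e1 : A 1 = A 0 := by
    have h : A 0 = A 1 * ((A 1)⁻¹ * (A 0)⁻¹ * A 0 * A 0) := by group
    rw [r3, mul_one] at h
    exact h.symm
  -- y4 = y5
  have e8 : A 8 = A 9 := by
    rw [e5] at r4
    have h : A 8 = A 9 * A 9 * (((A 9)⁻¹ * (A 9)⁻¹ * A 8 * A 9) * (A 9)⁻¹) := by group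
    rw [r4] at h
    rw [h]; group
  -- y2 = y5
  rw [e5, e1] at r5
  have h6 : (A 0)⁻¹ * (A 9 * A 0) = A 6 * ((A 6)⁻¹ * (A 0)⁻¹ * A 9 * A 0) := by group
  rw [r5, mul_one] at h6
  have e6 : A 6 = A 9 := by rw [← h6, ← comm]; group
  -- x3 = x1
  rw [e6, e1] at r6
  have h2' : (A 9)⁻¹ * (A 0 * A 9) = A 2 * ((A 2)⁻¹ * (A 9)⁻¹ * A 0 * A 9) := by group
  rw [r6, mul_one] at h2'
  have e2 : A 2 = A 0 := by rw [← h2', comm]; group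
  -- y5 = 1 from relator (11)
  rw [e6, e2, e8] at r11
  have key : A 9 * A 0 * A 9 * (A 0)⁻¹ * (A 0)⁻¹ * (A 9)⁻¹ * A 0 = A 9 := by
    calc A 9 * A 0 * A 9 * (A 0)⁻¹ * (A 0)⁻¹ * (A 9)⁻¹ * A 0
        = A 9 * A 0 * A 9 * (A 0)⁻¹ * (A 0)⁻¹ * ((A 9)⁻¹ * A 0) := by group
      _ = A 9 * A 0 * A 9 * (A 0)⁻¹ * (A 0)⁻¹ * (A 0 * (A 9)⁻¹) := by rw [c2']
      _ = A 9 * A 0 * A 9 * ((A 0)⁻¹ * (A 9)⁻¹) := by group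
      _ = A 9 * A 0 * A 9 * ((A 9)⁻¹ * (A 0)⁻¹) := by rw [c4']
      _ = A 9 := by group
  have t1 : A 9 = 1 := key.symm.trans r11
  -- y3 = y5
  rw [e8, e6] at r8
  have e7 : A 7 = A 9 := by
    have h : A 9 = A 7 * ((A 7)⁻¹ * (A 9)⁻¹ * A 9 * A 9) := by group
    rw [r8, mul_one] at h
    exact h.symm
  -- x1 = 1 from relator (12)
  rw [e1, e8, e7, e2, e5, t1] at r12
  have a1 : A 0 = 1 := by
    have h : A 0 = A 0 * A 0 * 1 * 1⁻¹ * 1⁻¹ * (A 0)⁻¹ * 1 := by group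
    exact h.trans r12
  -- x4 = x1
  rw [e2] at r7
  have e3 : A 3 = A 0 := by
    have h : A 3 = A 0 * A 0 * (((A 0)⁻¹ * (A 0)⁻¹ * A 3 * A 0) * (A 0)⁻¹) := by group
    rw [r7] at h
    rw [h]; group
  intro i
  fin_cases i
  · exact a1
  · exact e1.trans a1
  · exact e2.trans a1
  · exact e3.trans a1
  · exact e4.trans a1
  · exact e5.trans t1
  · exact e6.trans t1
  · exact e7.trans t1
  · exact e8.trans t1
  · exact t1

end aux

/-- The group presented by the ten generators `x1,…,x5, y1,…,y5` and the thirteen relators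
(1)–(13) is the trivial group. -/
theorem presentedGroup_corkRels_trivial : ∀ g : PresentedGroup corkRels, g = 1 := by
  intro g
  have := PresentedGroup.generated_by corkRels ⊥
    (fun j => Subgroup.mem_bot.mpr (ofA_eq_one j)) g
  exact Subgroup.mem_bot.mp this
end

section
/- Let G be any group and let x1, x2, x3, x4, x5, y1, y2, y3, y4, y5 ∈ G be elements satisfying the relations: (1) y1⁻¹·x1⁻¹·y5·x1 = 1, (2) x1⁻¹·y5⁻¹·x5·y5 = 1, (3) x2⁻¹·x5⁻¹·x1·x5 = 1, (4) y5⁻¹·y1⁻¹·y4·y1 = 1, (5) y2⁻¹·x1⁻¹·y1·x2 = 1, (6) x3⁻¹·y2⁻¹·x2·y2 = 1, (7) x5⁻¹·x3⁻¹·x4·x3 = 1, (8) y3⁻¹·y4⁻¹·y2·y4 = 1, and (13) x1·x5⁻¹ = 1. Then x1 = x2 = x3 = x4 = x5, y1 = y2 = y3 = y4 = y5, and x1·y1 = y1·x1. -/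
private lemma rel_eq {G : Type*} [Group G] {a b c d : G}
    (h : a⁻¹ * b * c * d = 1) : b * c * d = a := by
  have h' : a⁻¹ * (b * c * d) = 1 := by simpa [mul_assoc] using h
  exact (inv_mul_eq_one.mp h').symm

/-- In any group, the relations (1)–(8) and (13) of the Wirtinger-type presentation of
`π₁(W_{1,1})` force all the `x`-generators to coincide, all the `y`-generators to coincide,
and the two resulting elements to commute. -/
theorem relations_force_two_commuting_generators {G : Type*} [Group G]
    (x1 x2 x3 x4 x5 y1 y2 y3 y4 y5 : G)
    (h1 : y1⁻¹ * x1⁻¹ * y5 * x1 = 1)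
    (h2 : x1⁻¹ * y5⁻¹ * x5 * y5 = 1)
    (h3 : x2⁻¹ * x5⁻¹ * x1 * x5 = 1)
    (h4 : y5⁻¹ * y1⁻¹ * y4 * y1 = 1)
    (h5 : y2⁻¹ * x1⁻¹ * y1 * x2 = 1)
    (h6 : x3⁻¹ * y2⁻¹ * x2 * y2 = 1)
    (h7 : x5⁻¹ * x3⁻¹ * x4 * x3 = 1)
    (h8 : y3⁻¹ * y4⁻¹ * y2 * y4 = 1)
    (h13 : x1 * x5⁻¹ = 1) :
    (x1 = x2 ∧ x2 = x3 ∧ x3 = x4 ∧ x4 = x5) ∧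
    (y1 = y2 ∧ y2 = y3 ∧ y3 = y4 ∧ y4 = y5) ∧
    x1 * y1 = y1 * x1 := by
  have r1 := rel_eq h1
  have r2 := rel_eq h2
  have r3 := rel_eq h3
  have r4 := rel_eq h4
  have r5 := rel_eq h5
  have r6 := rel_eq h6
  have r7 := rel_eq h7
  have r8 := rel_eq h8
  have e13 : x1 = x5 := mul_inv_eq_one.mp h13
  rw [← e13] at r2 r3
  have hc : x1 * y5 = y5 * x1 := by
    calc x1 * y5 = y5 * (y5⁻¹ * x1 * y5) := by group
    _ = y5 * x1 := by rw [r2]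
  have ey : y5 = y1 := by
    calc y5 = x1⁻¹ * (x1 * y5) := by group
    _ = x1⁻¹ * (y5 * x1) := by rw [hc]
    _ = x1⁻¹ * y5 * x1 := by group
    _ = y1 := r1
  have hcy : x1 * y1 = y1 * x1 := by rw [← ey]; exact hc
  have ex2 : x1 = x2 := by
    calc x1 = x1⁻¹ * x1 * x1 := by group
    _ = x2 := r3
  have ey4 : y4 = y1 := by
    calc y4 = y1 * (y1⁻¹ * y4 * y1) * y1⁻¹ := by group
    _ = y1 * y1 * y1⁻¹ := by rw [r4, ey]
    _ = y1 := by group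
  have ey2 : y1 = y2 := by
    calc y1 = x1⁻¹ * (x1 * y1) := by group
    _ = x1⁻¹ * (y1 * x1) := by rw [hcy]
    _ = x1⁻¹ * y1 * x1 := by group
    _ = x1⁻¹ * y1 * x2 := by rw [ex2]
    _ = y2 := r5
  have ex3 : x1 = x3 := by
    calc x1 = y1⁻¹ * (y1 * x1) := by group
    _ = y1⁻¹ * (x1 * y1) := by rw [hcy]
    _ = y1⁻¹ * x1 * y1 := by group
    _ = y2⁻¹ * x2 * y2 := by rw [← ey2, ← ex2]
    _ = x3 := r6
  have ex4 : x4 = x3 := by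
    calc x4 = x3 * (x3⁻¹ * x4 * x3) * x3⁻¹ := by group
    _ = x3 * x5 * x3⁻¹ := by rw [r7]
    _ = x3 * x3 * x3⁻¹ := by rw [← e13, ex3]
    _ = x3 := by group
  have ey3 : y3 = y1 := by
    refine r8.symm.trans ?_
    rw [ey4, ← ey2]
    group
  refine ⟨⟨ex2, ex2.symm.trans ex3, ex4.symm, ex4.trans (ex3.symm.trans e13)⟩,
    ⟨ey2, ey2.symm.trans ey3.symm, ey3.trans ey4.symm, ey4.trans ey.symm⟩, hcy⟩
end
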